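/- arXiv:math/0401250 — 2 statements merged into one kernel-verified Lean document; each statement's English description precedes it below -/
import Mathlib

section
/- Let k ≥ 1 and let r, ρ > 0. Let g : ℂ^k → ℂ^k be holomorphic on the open ball B(0,r), with g(0) = 0 and ‖g(u)‖ ≤ ρ for every u ∈ B(0,r). Then for every u with ‖u‖ < r one has ‖g(u) − (D₀g)(u)‖ ≤ ρ · (‖u‖/r)² / (1 − ‖u‖/r), where D₀g denotes the Fréchet derivative of g at 0. -/
/-!
Restricting `g` to the complex line through `u` gives a holomorphic function `h z = g (z • u)` on
the disc of radius `R = r / ‖u‖ > 1`, bounded by `ρ`. Cauchy's estimates bound its `n`-th Taylor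
coefficient by `ρ / R ^ n`, so the Taylor series at `z = 1`, with its constant and linear terms
removed, is dominated by the geometric tail `ρ ∑_{n ≥ 2} R⁻ⁿ = ρ R⁻² / (1 - R⁻¹)`.
-/

open Metric Filter Topology

theorem HasSum.norm_sub_sub_le_of_norm_le_geometric {E : Type*} [NormedAddCommGroup E]
    {a : ℕ → E} {x : E} (hx : HasSum a x) {C t : ℝ} (ht0 : 0 ≤ t) (ht1 : t < 1)
    (ha : ∀ n, ‖a n‖ ≤ C * t ^ n) :
    ‖x - a 0 - a 1‖ ≤ C * t ^ 2 / (1 - t) := by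
  have htail : HasSum (fun n => a (n + 2)) (x - a 0 - a 1) := by
    simpa [Finset.sum_range_succ, sub_sub] using (hasSum_nat_add_iff' 2).2 hx
  calc ‖x - a 0 - a 1‖ ≤ C * t ^ 2 * (1 - t)⁻¹ :=
        htail.norm_le_of_bounded ((hasSum_geometric_of_lt_one ht0 ht1).mul_left _)
          fun n => (ha (n + 2)).trans_eq (by ring)
    _ = C * t ^ 2 / (1 - t) := (div_eq_mul_inv _ _).symm

section

variable {F : Type*} [NormedAddCommGroup F] [NormedSpace ℂ F] [CompleteSpace F]

-- Cauchy's estimate on circles of radius `R' < R`, then `R' → R`.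
theorem norm_iteratedDeriv_le_of_forall_mem_ball_norm_le {f : ℂ → F} {c : ℂ} {R C : ℝ}
    (n : ℕ) (hR : 0 < R) (hf : DifferentiableOn ℂ f (ball c R))
    (hC : ∀ z ∈ ball c R, ‖f z‖ ≤ C) :
    ‖iteratedDeriv n f c‖ ≤ n.factorial * C / R ^ n := by
  have hlim : Tendsto (fun R' : ℝ => n.factorial * C / R' ^ n) (𝓝[<] R)
      (𝓝 (n.factorial * C / R ^ n)) :=
    ((continuousAt_const.div (continuousAt_id.pow n) (pow_ne_zero n hR.ne')).tendsto).mono_left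
      nhdsWithin_le_nhds
  refine ge_of_tendsto hlim ?_
  filter_upwards [Ioo_mem_nhdsLT hR] with R' ⟨hR'0, hR'R⟩
  exact Complex.norm_iteratedDeriv_le_of_forall_mem_sphere_norm_le n hR'0
    (hf.diffContOnCl_ball (closedBall_subset_ball hR'R))
    fun z hz => hC z (sphere_subset_closedBall.trans (closedBall_subset_ball hR'R) hz)

theorem norm_sub_sub_smul_deriv_le_of_forall_mem_ball_norm_le {f : ℂ → F} {R ρ : ℝ}
    (hf : DifferentiableOn ℂ f (ball 0 R)) (hρ : ∀ z ∈ ball 0 R, ‖f z‖ ≤ ρ) {w : ℂ}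
    (hw : ‖w‖ < R) :
    ‖f w - f 0 - w • deriv f 0‖ ≤ ρ * (‖w‖ / R) ^ 2 / (1 - ‖w‖ / R) := by
  have hR : 0 < R := (norm_nonneg w).trans_lt hw
  have hsum := Complex.hasSum_taylorSeries_on_ball hf (mem_ball_zero_iff.2 hw)
  simp only [sub_zero] at hsum
  convert hsum.norm_sub_sub_le_of_norm_le_geometric (div_nonneg (norm_nonneg w) hR.le)
    ((div_lt_one hR).2 hw) fun n => ?_ using 3
  · simp
  · simp
  calc ‖(n.factorial : ℂ)⁻¹ • w ^ n • iteratedDeriv n f 0‖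
      = (n.factorial : ℝ)⁻¹ * ‖w‖ ^ n * ‖iteratedDeriv n f 0‖ := by
        simp [norm_smul, mul_assoc]
    _ ≤ (n.factorial : ℝ)⁻¹ * ‖w‖ ^ n * (n.factorial * ρ / R ^ n) := by
        gcongr
        exact norm_iteratedDeriv_le_of_forall_mem_ball_norm_le n hR hf hρ
    _ = ρ * (‖w‖ / R) ^ n := by
        rw [div_pow]
        field_simp

theorem norm_sub_sub_fderiv_le_of_forall_mem_ball_norm_le {E : Type*} [NormedAddCommGroup E]
    [NormedSpace ℂ E] {g : E → F} {r ρ : ℝ} (hg : DifferentiableOn ℂ g (ball 0 r))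
    (hρ : ∀ u ∈ ball 0 r, ‖g u‖ ≤ ρ) {u : E} (hu : ‖u‖ < r) :
    ‖g u - g 0 - fderiv ℂ g 0 u‖ ≤ ρ * (‖u‖ / r) ^ 2 / (1 - ‖u‖ / r) := by
  rcases eq_or_ne u 0 with rfl | hu0
  · simp
  have hnu : 0 < ‖u‖ := norm_pos_iff.2 hu0
  have hline : ∀ z ∈ ball (0 : ℂ) (r / ‖u‖), z • u ∈ ball 0 r := fun z hz => by
    rw [mem_ball_zero_iff, norm_smul, ← lt_div_iff₀ hnu]
    exact mem_ball_zero_iff.1 hz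
  have hderiv : deriv (g ∘ fun z : ℂ => z • u) 0 = fderiv ℂ g 0 u := by
    have h0 : (0 : ℂ) • u ∈ ball 0 r := hline 0 (mem_ball_self (div_pos (hnu.trans hu) hnu))
    have hg0 : HasFDerivAt g (fderiv ℂ g ((0 : ℂ) • u)) ((0 : ℂ) • u) :=
      (hg.differentiableAt (isOpen_ball.mem_nhds h0)).hasFDerivAt
    simpa using (hg0.comp_hasDerivAt 0 ((hasDerivAt_id (0 : ℂ)).smul_const u)).deriv
  have := norm_sub_sub_smul_deriv_le_of_forall_mem_ball_norm_le
    (hg.comp (differentiableOn_id.smul_const u) hline) (fun z hz => hρ _ (hline z hz))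
    (w := 1) (by simpa [lt_div_iff₀ hnu] using hu)
  simpa [hderiv, div_div_eq_mul_div] using this

end

theorem stmt_0_general (k : ℕ) (r ρ : ℝ)
    (g : EuclideanSpace ℂ (Fin k) → EuclideanSpace ℂ (Fin k))
    (hg : ∀ u ∈ ball (0 : EuclideanSpace ℂ (Fin k)) r, DifferentiableAt ℂ g u)
    (hg0 : g 0 = 0)
    (hbd : ∀ u ∈ ball (0 : EuclideanSpace ℂ (Fin k)) r, ‖g u‖ ≤ ρ) :
    ∀ u : EuclideanSpace ℂ (Fin k), ‖u‖ < r →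
      ‖g u - fderiv ℂ g 0 u‖ ≤ ρ * (‖u‖ / r) ^ 2 / (1 - ‖u‖ / r) := by
  intro u hu
  simpa [hg0] using norm_sub_sub_fderiv_le_of_forall_mem_ball_norm_le
    (fun v hv => (hg v hv).differentiableWithinAt) hbd hu

theorem stmt_0 (k : ℕ) (hk : 1 ≤ k) (r ρ : ℝ) (hr : 0 < r) (hρ : 0 < ρ)
    (g : EuclideanSpace ℂ (Fin k) → EuclideanSpace ℂ (Fin k))
    (hg : ∀ u ∈ ball (0 : EuclideanSpace ℂ (Fin k)) r, DifferentiableAt ℂ g u)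
    (hg0 : g 0 = 0)
    (hbd : ∀ u ∈ ball (0 : EuclideanSpace ℂ (Fin k)) r, ‖g u‖ ≤ ρ) :
    ∀ u : EuclideanSpace ℂ (Fin k), ‖u‖ < r →
      ‖g u - fderiv ℂ g 0 u‖ ≤ ρ * (‖u‖ / r) ^ 2 / (1 - ‖u‖ / r) :=
  stmt_0_general k r ρ g hg hg0 hbd
end

section
/- Let X be a measurable space, let f : X → X be measurable, and let m and μ be measures on X, with μ finite. Assume that for every measurable set N with m(N) = 0 there exists a measurable set N' with f(N) ⊆ N' and m(N') = 0. If μ is mutually singular with respect to m, then the pushforward measure f_*μ is mutually singular with respect to m. -/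
open MeasureTheory

theorem stmt_12 (X : Type*) [MeasurableSpace X] (f : X → X) (hf : Measurable f)
    (m μ : Measure X) [IsFiniteMeasure μ]
    (himg : ∀ N : Set X, MeasurableSet N → m N = 0 →
      ∃ N' : Set X, MeasurableSet N' ∧ f '' N ⊆ N' ∧ m N' = 0)
    (hsing : μ ⟂ₘ m) :
    Measure.map f μ ⟂ₘ m := by
  obtain ⟨s, hs, hμs, hms⟩ := hsing
  obtain ⟨N', hN', hsub, hmN'⟩ := himg sᶜ hs.compl hms
  refine ⟨N'ᶜ, hN'.compl, ?_, by simpa using hmN'⟩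
  rw [Measure.map_apply hf hN'.compl]
  refine measure_mono_null (fun x hx => ?_) hμs
  by_contra hxs
  exact hx (hsub ⟨x, hxs, rfl⟩)
end
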